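/- arXiv:1302.4661 — 2 statements merged into one kernel-verified Lean document; each statement's English description precedes it below -/
import Mathlib

section
/- Let K be a compact Hausdorff scattered space of finite height and denote by K^(n) its n-th Cantor–Bendixson derivative. If for every natural number n, K^(n+1) admits an extension operator in K^(n), then K has the extension property. -/
open Filter Topology
open scoped ZeroAtInfty

noncomputable section

/-- `E` is an extension operator for the closed set `F` in `K`. -/
def IsExtensionOperator {K : Type*} [TopologicalSpace K] (F : Set K)
    (E : C(↥F, ℝ) →L[ℝ] C(K, ℝ)) : Prop :=
  ∀ f : C(↥F, ℝ), (E f).restrict F = f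

/-- `F` admits an extension operator in `K`. -/
def HasExtensionOperator {K : Type*} [TopologicalSpace K] (F : Set K) : Prop :=
  ∃ E : C(↥F, ℝ) →L[ℝ] C(K, ℝ), IsExtensionOperator F E

/-- `K` has the extension property. -/
def HasExtensionProperty (K : Type*) [TopologicalSpace K] : Prop :=
  ∀ F : Set K, F.Nonempty → IsClosed F → HasExtensionOperator F

/-- `F` admits a regular extension operator in `K`. -/
def HasRegularExtensionOperator {K : Type*} [TopologicalSpace K] [CompactSpace K]
    (F : Set K) (hF : IsClosed F) : Prop :=
  haveI : CompactSpace ↥F := isCompact_iff_compactSpace.mp hF.isCompact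
  ∃ E : C(↥F, ℝ) →L[ℝ] C(K, ℝ), IsExtensionOperator F E ∧ ‖E‖ ≤ 1 ∧ E 1 = 1

/-- `K` has the regular extension property. -/
def HasRegularExtensionProperty (K : Type*) [TopologicalSpace K] [CompactSpace K] : Prop :=
  ∀ F : Set K, F.Nonempty → ∀ hF : IsClosed F, HasRegularExtensionOperator F hF

/-- The submodule `C(K|G)` of `C(K, ℝ)` of functions vanishing on `G`. -/
def vanishingSubmodule {K : Type*} [TopologicalSpace K] (G : Set K) :
    Submodule ℝ C(K, ℝ) where
  carrier := {f | ∀ x ∈ G, f x = 0}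
  add_mem' := by intro f g hf hg x hx; simp [hf x hx, hg x hx]
  zero_mem' := by intro x hx; simp
  smul_mem' := by intro c f hf x hx; simp [hf x hx]

/-- The canonical basis vector of `c₀(I)`: the characteristic function of `{i}`. -/
def c0Single {I : Type*} [TopologicalSpace I] [DiscreteTopology I] (i : I) : C₀(I, ℝ) :=
  letI := Classical.decEq I
  { toFun := fun j => if j = i then (1 : ℝ) else 0
    continuous_toFun := continuous_of_discreteTopology
    zero_at_infty' := by
      have h : (fun j => if j = i then (1 : ℝ) else 0) =ᶠ[Filter.cocompact I] (fun _ => 0) := by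
        filter_upwards [Filter.mem_cocompact.mpr ⟨{i}, isCompact_singleton, subset_rfl⟩] with j hj
        simp only [Set.mem_compl_iff, Set.mem_singleton_iff] at hj
        simp [hj]
      exact Filter.Tendsto.congr' h.symm tendsto_const_nhds }

/-- `X` satisfies the countable chain condition. -/
def CountableChainCondition (X : Type*) [TopologicalSpace X] : Prop :=
  ∀ 𝒰 : Set (Set X), (∀ U ∈ 𝒰, IsOpen U ∧ U.Nonempty) → 𝒰.Pairwise Disjoint → 𝒰.Countable


/-! Points outside the derived set `K'` are isolated, so a function on a closed set `F ⊆ K`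
can be glued continuously to any continuous function on `K` that agrees with it on `F ∩ K'`.
Hence if some `L ⊇ K'` admits an extension operator in `K` and itself has the extension
property, so does `K`: extend `f|_{F ∩ L}` to `L`, then to `K`, and glue the result with `f`.
Applied to `K^(n+1) ⊆ K^(n)`, this propagates the extension property down from the empty
`K^(N)` to `K^(0) = K`. -/

open Set

theorem continuous_dite_of_eq_on_derivedSet {X Y : Type*} [TopologicalSpace X]
    [TopologicalSpace Y] {F : Set X} [DecidablePred (· ∈ F)] (hF : IsClosed F) (f : C(F, Y))
    (g : C(X, Y)) (hfg : ∀ x (hx : x ∈ F), x ∈ derivedSet univ → f ⟨x, hx⟩ = g x) :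
    Continuous fun x => if h : x ∈ F then f ⟨x, h⟩ else g x := by
  set φ : X → Y := fun x => if h : x ∈ F then f ⟨x, h⟩ else g x
  have hφg : EqOn φ g Fᶜ := fun x hx => dif_neg hx
  refine continuous_iff_continuousAt.2 fun x => ?_
  rw [← continuousWithinAt_univ, ← union_compl_self F, continuousWithinAt_union]
  by_cases hxF : x ∈ F
  · refine ⟨?_, ?_⟩
    · rw [continuousWithinAt_iff_continuousAt_domRestrict _ hxF]
      have hφf : F.domRestrict φ = f := funext fun y => dif_pos y.2
      exact hφf ▸ f.continuous.continuousAt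
    · by_cases hx : x ∈ closure Fᶜ
      · have hxd : x ∈ derivedSet univ := by
          rw [closure_eq_self_union_derivedSet] at hx
          exact derivedSet_mono _ _ (subset_univ _) (hx.resolve_left (not_not.2 hxF))
        exact g.continuous.continuousWithinAt.congr hφg
          (by simp only [φ, dif_pos hxF, hfg x hxF hxd])
      · exact continuousWithinAt_of_notMem_closure hx
  · exact ⟨continuousWithinAt_of_notMem_closure (by rwa [hF.closure_eq]),
      g.continuous.continuousWithinAt.congr hφg (hφg hxF)⟩

theorem HasExtensionOperator.of_eq_on_derivedSet {K : Type*} [TopologicalSpace K]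
    [CompactSpace K] {F : Set K} (hF : IsClosed F) (T : C(F, ℝ) →L[ℝ] C(K, ℝ))
    (hT : ∀ f x (hx : x ∈ F), x ∈ derivedSet univ → f ⟨x, hx⟩ = T f x) :
    HasExtensionOperator F := by
  classical
  have : CompactSpace F := isCompact_iff_compactSpace.mp hF.isCompact
  let E : C(F, ℝ) →ₗ[ℝ] C(K, ℝ) :=
    { toFun f := ⟨_, continuous_dite_of_eq_on_derivedSet hF f (T f) (hT f)⟩
      map_add' f g := by ext x; by_cases hx : x ∈ F <;> simp [hx]
      map_smul' c f := by ext x; by_cases hx : x ∈ F <;> simp [hx] }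
  have hE : ∀ f, ‖E f‖ ≤ (‖T‖ + 1) * ‖f‖ := fun f =>
    (ContinuousMap.norm_le _ (by positivity)).2 fun x => by
      by_cases hx : x ∈ F
      · simp only [E, LinearMap.coe_mk, AddHom.coe_mk, ContinuousMap.coe_mk, dif_pos hx]
        nlinarith [f.norm_coe_le_norm ⟨x, hx⟩, norm_nonneg T, norm_nonneg f]
      · simp only [E, LinearMap.coe_mk, AddHom.coe_mk, ContinuousMap.coe_mk, dif_neg hx]
        nlinarith [(T f).norm_coe_le_norm x, T.le_opNorm f, norm_nonneg f]
  exact ⟨E.mkContinuous _ hE, fun f => ContinuousMap.ext fun x => dif_pos x.2⟩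

theorem HasExtensionProperty.hasExtensionOperator {K : Type*} [TopologicalSpace K]
    (hK : HasExtensionProperty K) {F : Set K} (hF : IsClosed F) : HasExtensionOperator F := by
  rcases F.eq_empty_or_nonempty with rfl | hne
  · exact ⟨0, fun f => ContinuousMap.ext fun x => x.2.elim⟩
  · exact hK F hne hF

theorem HasExtensionProperty.of_derivedSet_subset {K : Type*} [TopologicalSpace K]
    [CompactSpace K] {L : Set K} (hder : derivedSet univ ⊆ L) (hL : HasExtensionOperator L)
    (hLK : HasExtensionProperty L) : HasExtensionProperty K := by
  intro F _ hF
  obtain ⟨EL, hEL⟩ := hL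
  obtain ⟨G, hG⟩ := hLK.hasExtensionOperator (hF.preimage continuous_subtype_val)
  let incl : C((Subtype.val ⁻¹' F : Set L), F) := ⟨fun z => ⟨z.1.1, z.2⟩, by fun_prop⟩
  refine .of_eq_on_derivedSet hF (EL ∘L G ∘L ContinuousMap.compCLM ℝ ℝ incl)
    fun f x hx hxd => ?_
  have hxL : x ∈ L := hder hxd
  calc f ⟨x, hx⟩ = (G (f.comp incl)).restrict _ ⟨⟨x, hxL⟩, hx⟩ := by rw [hG]; rfl
    _ = (EL (G (f.comp incl))).restrict L ⟨x, hxL⟩ := by rw [hEL]; rfl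

theorem HasExtensionProperty.of_homeomorph {X Y : Type*} [TopologicalSpace X]
    [TopologicalSpace Y] (e : X ≃ₜ Y) (hX : HasExtensionProperty X) :
    HasExtensionProperty Y := by
  intro F hne hF
  obtain ⟨E, hE⟩ := hX (e ⁻¹' F) (hne.preimage e.surjective) (hF.preimage e.continuous)
  let j : C(e ⁻¹' F, F) := ⟨fun z => ⟨e z, z.2⟩, by fun_prop⟩
  refine ⟨ContinuousMap.compCLM ℝ ℝ (e.symm : C(Y, X)) ∘L E ∘L
    ContinuousMap.compCLM ℝ ℝ j, fun f => ContinuousMap.ext fun y => ?_⟩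
  have hy : e.symm y ∈ e ⁻¹' F := by simp [y.2]
  calc (E (f.comp j)).restrict _ ⟨e.symm y, hy⟩ = f (j ⟨e.symm y, hy⟩) := by rw [hE]; rfl
    _ = f y := by simp [j]

def Homeomorph.preimageVal {X : Type*} [TopologicalSpace X] {s t : Set X} (hts : t ⊆ s) :
    (Subtype.val ⁻¹' t : Set s) ≃ₜ t where
  toFun z := ⟨z.1.1, z.2⟩
  invFun y := ⟨⟨y.1, hts y.2⟩, y.2⟩
  continuous_toFun := by fun_prop
  continuous_invFun := by fun_prop

theorem derivedSet_univ_subset_preimage_val {X : Type*} [TopologicalSpace X] (s : Set X) :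
    derivedSet (univ : Set s) ⊆ Subtype.val ⁻¹' derivedSet s := fun x hx => by
  simpa using continuous_subtype_val.image_derivedSet Subtype.val_injective ⟨x, hx, rfl⟩

theorem isClosed_iterate_derivedSet_univ {X : Type*} [TopologicalSpace X] [T1Space X] :
    ∀ n, IsClosed (derivedSet^[n] (univ : Set X))
  | 0 => isClosed_univ
  | n + 1 => by rw [Function.iterate_succ_apply']; exact isClosed_derivedSet _

theorem iterate_derivedSet_univ_succ_subset {X : Type*} [TopologicalSpace X] (n : ℕ) :
    derivedSet^[n + 1] (univ : Set X) ⊆ derivedSet^[n] univ := by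
  rw [Function.iterate_succ_apply]
  exact (Monotone.iterate (fun _ _ => derivedSet_mono _ _) n) (subset_univ _)

theorem hasExtensionProperty_iterate_derivedSet_univ {K : Type*} [TopologicalSpace K]
    [CompactSpace K] [T1Space K]
    (h : ∀ n : ℕ, HasExtensionOperator
      ((Subtype.val : derivedSet^[n] (univ : Set K) → K) ⁻¹' derivedSet^[n + 1] univ)) :
    ∀ j m, derivedSet^[m + j] (univ : Set K) = ∅ →
      HasExtensionProperty (derivedSet^[m] (univ : Set K))
  | 0, m, hm => fun _ ⟨x, _⟩ _ => (eq_empty_iff_forall_notMem.mp hm x x.2).elim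
  | j + 1, m, hm => by
    have : CompactSpace (derivedSet^[m] (univ : Set K)) :=
      isCompact_iff_compactSpace.mp (isClosed_iterate_derivedSet_univ m).isCompact
    refine .of_derivedSet_subset ?_ (h m) ?_
    · rw [Function.iterate_succ_apply']
      exact derivedSet_univ_subset_preimage_val _
    · exact .of_homeomorph (Homeomorph.preimageVal (iterate_derivedSet_univ_succ_subset m)).symm
        (hasExtensionProperty_iterate_derivedSet_univ h j (m + 1) (by rwa [add_right_comm]))

theorem stmt15 {K : Type*} [TopologicalSpace K] [CompactSpace K] [T2Space K]
    (hscat : ∃ n : ℕ, derivedSet^[n] (Set.univ : Set K) = ∅)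
    (h : ∀ n : ℕ, HasExtensionOperator
        ((Subtype.val : ↥(derivedSet^[n] (Set.univ : Set K)) → K) ⁻¹'
          (derivedSet^[n + 1] (Set.univ : Set K)))) :
    HasExtensionProperty K := by
  obtain ⟨n, hn⟩ := hscat
  exact .of_homeomorph (Homeomorph.Set.univ K)
    (hasExtensionProperty_iterate_derivedSet_univ h n 0 (by rwa [zero_add]))
end
end

section
/- If a compact Hausdorff space K has the extension property and satisfies the countable chain condition, then K has countable spread, i.e., every subset of K that is discrete in its subspace topology is countable. -/
open Filter Topology
open scoped ZeroAtInfty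

noncomputable section

/-!
Let `D` be discrete and `E` an extension operator for `closure D`. Urysohn functions `f d`
with `f d d = 1` and `f d = 0` on `D \ {d}` have finite sums of norm at most `1` on
`closure D`, so a point `x` lies in at most `2‖E‖` of the open sets `{E (f d) > 1/2}`.
A family of nonempty open sets of bounded order in a ccc space is countable: induct on the
order, splitting off a maximal disjoint subfamily, which is countable by ccc.
-/

open Set

theorem Set.exists_pairwiseDisjoint_subset_forall_inter_nonempty {ι X : Type*}
    {V : ι → Set X} {S : Set ι} (hne : ∀ i ∈ S, (V i).Nonempty) :
    ∃ B ⊆ S, B.PairwiseDisjoint V ∧ ∀ i ∈ S, ∃ j ∈ B, (V i ∩ V j).Nonempty := by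
  obtain ⟨B, ⟨hBS, hB⟩, hBmax⟩ := zorn_subset {B | B ⊆ S ∧ B.PairwiseDisjoint V}
    fun c hc hchain => ⟨⋃₀ c, ⟨sUnion_subset fun B hB => (hc hB).1,
      (hchain.pairwiseDisjoint_sUnion V).2 fun B hB => (hc hB).2⟩,
      fun _ => subset_sUnion_of_mem⟩
  refine ⟨B, hBS, hB, fun i hi => ?_⟩
  by_contra! hdisj
  have hiB : i ∈ B := hBmax
    ⟨insert_subset hi hBS, hB.insert fun j hj _ => disjoint_iff_inter_eq_empty.2 (hdisj j hj)⟩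
    (subset_insert i B) (mem_insert i B)
  obtain ⟨x, hx⟩ := hne i hi
  exact (hdisj i hiB).subset ⟨hx, hx⟩

namespace CountableChainCondition

variable {X ι : Type*} [TopologicalSpace X] (hccc : CountableChainCondition X)
include hccc

theorem countable_of_pairwiseDisjoint {V : ι → Set X} {S : Set ι}
    (ho : ∀ i ∈ S, IsOpen (V i)) (hne : ∀ i ∈ S, (V i).Nonempty) (hS : S.PairwiseDisjoint V) :
    S.Countable := by
  have hinj : InjOn V S := fun i hi j hj hij =>
    hS.elim_set hi hj _ (hne i hi).some_mem (hij ▸ (hne i hi).some_mem)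
  refine countable_of_injective_of_countable_image hinj (hccc _ ?_ ?_)
  · rintro _ ⟨i, hi, rfl⟩
    exact ⟨ho i hi, hne i hi⟩
  · exact (hinj.pairwiseDisjoint_image (f := id)).2 hS

theorem countable_of_forall_card_le {V : ι → Set X} {S : Set ι} (n : ℕ)
    (ho : ∀ i ∈ S, IsOpen (V i)) (hne : ∀ i ∈ S, (V i).Nonempty)
    (hcard : ∀ (x : X) (s : Finset ι), ↑s ⊆ S → (∀ i ∈ s, x ∈ V i) → s.card ≤ n) :
    S.Countable := by
  classical
  induction n generalizing V S with
  | zero =>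
    refine Set.Countable.mono (fun i hi => ?_) countable_empty
    obtain ⟨x, hx⟩ := hne i hi
    simpa using hcard x {i} (by simpa using hi) (by simpa using hx)
  | succ n ih =>
    obtain ⟨B, hBS, hB, hmeet⟩ := exists_pairwiseDisjoint_subset_forall_inter_nonempty hne
    have hBc : B.Countable :=
      countable_of_pairwiseDisjoint hccc (fun j hj => ho j (hBS hj))
        (fun j hj => hne j (hBS hj)) hB
    -- Each `x ∈ V j` already accounts for `j`, so the traces on `V j` have order `≤ n`.
    have hA : ∀ j ∈ B, {i ∈ S | i ≠ j ∧ (V i ∩ V j).Nonempty}.Countable := by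
      intro j hj
      refine ih (V := fun i => V i ∩ V j) (fun i hi => (ho i hi.1).inter (ho j (hBS hj)))
        (fun i hi => hi.2.2) fun x s hsA hx => ?_
      rcases s.eq_empty_or_nonempty with rfl | ⟨i, hi⟩
      · simp
      have hjs : j ∉ s := fun h => (hsA h).2.1 rfl
      have hins := hcard x (insert j s)
        (by simpa [insert_subset_iff] using ⟨hBS hj, fun i hi => (hsA hi).1⟩)
        (by simpa using ⟨(hx i hi).2, fun i hi => (hx i hi).1⟩)
      rw [Finset.card_insert_of_notMem hjs] at hins
      omega
    refine (hBc.union (hBc.biUnion hA)).mono fun i hi => ?_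
    obtain ⟨j, hj, hij⟩ := hmeet i hi
    by_cases h : i = j
    · exact Or.inl (h ▸ hj)
    · exact Or.inr (mem_biUnion hj ⟨hi, h, hij⟩)

end CountableChainCondition

theorem exists_continuous_eq_one_eqOn_zero_of_isDiscrete {X : Type*} [TopologicalSpace X]
    [NormalSpace X] [T1Space X] {D : Set X} (hD : IsDiscrete D) {a : X} (ha : a ∈ D) :
    ∃ f : C(X, ℝ), f a = 1 ∧ EqOn f 0 (D \ {a}) ∧ ∀ x, f x ∈ Icc (0 : ℝ) 1 := by
  obtain ⟨U, hU, hUD⟩ := isOpen_inter_eq_singleton_of_mem_discrete hD ha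
  have hdisj : Disjoint Uᶜ {a} := by
    rw [disjoint_singleton_right, notMem_compl_iff]
    exact (hUD.symm ▸ mem_singleton a : a ∈ U ∩ D).1
  obtain ⟨f, hf0, hf1, hf⟩ :=
    exists_continuous_zero_one_of_isClosed hU.isClosed_compl isClosed_singleton hdisj
  refine ⟨f, hf1 rfl, fun x hx => hf0 fun hxU => hx.2 ?_, hf⟩
  simpa [← hUD] using And.intro hxU hx.1

theorem norm_sum_restrict_closure_le_one {X : Type*} [TopologicalSpace X] {D : Set X}
    [CompactSpace (closure D)] (f : D → C(X, ℝ)) (hf : ∀ d x, f d x ∈ Icc (0 : ℝ) 1)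
    (hf_zero : ∀ d : D, EqOn (f d) 0 (D \ {d.1})) (s : Finset D) :
    ‖∑ d ∈ s, (f d).restrict (closure D)‖ ≤ 1 := by
  classical
  have hD : D ⊆ {x | ∑ d ∈ s, f d x ≤ 1} := by
    intro e he
    calc ∑ d ∈ s, f d e ≤ ∑ d ∈ insert ⟨e, he⟩ s, f d e :=
          Finset.sum_le_sum_of_subset_of_nonneg (Finset.subset_insert _ _)
            fun d _ _ => (hf d e).1
      _ = f ⟨e, he⟩ e := Finset.sum_eq_single_of_mem _ (Finset.mem_insert_self _ _)
            fun d _ hd => hf_zero d ⟨he, fun h => hd (Subtype.ext (mem_singleton_iff.1 h)).symm⟩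
      _ ≤ 1 := (hf _ e).2
  have hclosed : IsClosed {x | ∑ d ∈ s, f d x ≤ 1} :=
    isClosed_le (continuous_finsetSum s fun d _ => (f d).continuous) continuous_const
  refine (ContinuousMap.norm_le _ zero_le_one).2 fun y => ?_
  have hy : ∑ d ∈ s, f d y ≤ 1 := closure_minimal hD hclosed y.2
  have hy0 : 0 ≤ ∑ d ∈ s, f d y := Finset.sum_nonneg fun d _ => (hf d y).1
  simpa [ContinuousMap.sum_apply, abs_of_nonneg hy0] using hy

theorem ContinuousLinearMap.card_mul_le_opNorm {E ι K : Type*} [NormedAddCommGroup E]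
    [NormedSpace ℝ E] [TopologicalSpace K] [CompactSpace K] (T : E →L[ℝ] C(K, ℝ))
    {f : ι → E} {s : Finset ι} (hs : ‖∑ i ∈ s, f i‖ ≤ 1) {x : K} {ε : ℝ}
    (hx : ∀ i ∈ s, ε ≤ T (f i) x) : s.card * ε ≤ ‖T‖ :=
  calc s.card * ε = ∑ _i ∈ s, ε := by simp
    _ ≤ ∑ i ∈ s, T (f i) x := Finset.sum_le_sum hx
    _ = T (∑ i ∈ s, f i) x := by simp [ContinuousMap.sum_apply]
    _ ≤ ‖T (∑ i ∈ s, f i)‖ := (le_abs_self _).trans ((T _).norm_coe_le_norm x)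
    _ ≤ ‖T‖ * ‖∑ i ∈ s, f i‖ := T.le_opNorm _
    _ ≤ ‖T‖ := mul_le_of_le_one_right (norm_nonneg T) hs

theorem IsExtensionOperator.apply_coe {K : Type*} [TopologicalSpace K] {F : Set K}
    {E : C(F, ℝ) →L[ℝ] C(K, ℝ)} (hE : IsExtensionOperator F E) (f : C(F, ℝ)) (y : F) :
    E f y = f y :=
  DFunLike.congr_fun (hE f) y

theorem stmt19 {K : Type*} [TopologicalSpace K] [CompactSpace K] [T2Space K]
    (hK : HasExtensionProperty K) (hccc : CountableChainCondition K) :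
    ∀ D : Set K, DiscreteTopology ↥D → D.Countable := by
  intro D hD
  rcases D.eq_empty_or_nonempty with rfl | hDne
  · exact countable_empty
  have : CompactSpace (closure D) := isCompact_iff_compactSpace.1 isClosed_closure.isCompact
  obtain ⟨E, hE⟩ := hK _ hDne.closure isClosed_closure
  choose f hf_one hf_zero hf using fun d : D =>
    exists_continuous_eq_one_eqOn_zero_of_isDiscrete ⟨hD⟩ d.2
  set g : D → C(K, ℝ) := fun d => E ((f d).restrict (closure D))
  have hg_one : ∀ d : D, g d d = 1 := fun d =>
    (hE.apply_coe _ ⟨d, subset_closure d.2⟩).trans (hf_one d)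
  have huniv := hccc.countable_of_forall_card_le (V := fun d => g d ⁻¹' Ioi (1 / 2))
    (S := univ) ⌈2 * ‖E‖⌉₊ (fun d _ => isOpen_Ioi.preimage (g d).continuous)
    (fun d _ => ⟨d, by norm_num [hg_one]⟩) fun x s _ hx => by
      have hle := E.card_mul_le_opNorm (norm_sum_restrict_closure_le_one f hf hf_zero s)
        fun d hd => (hx d hd).le
      exact_mod_cast (by linarith : (s.card : ℝ) ≤ 2 * ‖E‖).trans (Nat.le_ceil _)
  exact countable_coe_iff.1 (countable_univ_iff.1 huniv)
end
end
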